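/- arXiv:2306.07701 — 2 statements merged into one kernel-verified Lean document; each statement's English description precedes it below -/
import Mathlib

section
/- Let ψ : (0,∞) → [0,∞) be measurable with 0 < ∫₀^{∞} ψ(x)dx = ∫₀^{∞} x ψ(x)dx < ∞ and assume lim_{τ→0⁺} τ ∫_{1/τ}^{∞} xⁿ ψ(x)dx = 0 for every integer n ≥ 2. For τ > 0 define D_*(μ,τ) = ψ((1−μ)/(2τ)) · [4πτ ∫₀^{1/τ} ψ(x)dx]^{−1} on [−1,1]. Then the probability measures on [−1,1] with density μ ↦ 2π D_*(μ,τ) (with respect to Lebesgue measure) converge weakly to the Dirac measure δ₁ as τ → 0⁺. -/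
/-!
Substituting `μ = 1 - 2τx` turns the integral into
`(∫₀^{1/τ} ψ(x) g(1 - 2τx) dx) / (∫₀^{1/τ} ψ)`. Dominated convergence, with dominating function
`|ψ| ‖g‖`, sends the numerator to `g(1) ∫₀^∞ ψ` and the denominator to `∫₀^∞ ψ > 0`.
-/

open MeasureTheory Filter Topology

theorem integral_Icc_neg_one_one_eq_mul_integral_Ioc {τ : ℝ} (hτ : 0 < τ) (h : ℝ → ℝ) :
    ∫ μ in Set.Icc (-1 : ℝ) 1, h μ = 2 * τ * ∫ x in Set.Ioc 0 (1 / τ), h (1 - 2 * τ * x) := by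
  have h2τ : 2 * τ ≠ 0 := by positivity
  rw [integral_Icc_eq_integral_Ioc, ← intervalIntegral.integral_of_le (by norm_num),
    ← intervalIntegral.integral_of_le (by positivity),
    intervalIntegral.integral_comp_sub_mul h h2τ, smul_eq_mul, mul_inv_cancel_left₀ h2τ]
  congr 1 <;> field_simp <;> ring

theorem tendsto_setIntegral_Ioc_one_div_mul_comp_sub {ψ : ℝ → ℝ}
    (hψ : IntegrableOn ψ (Set.Ioi 0)) (g : BoundedContinuousFunction ℝ ℝ) (a c : ℝ) :
    Tendsto (fun τ => ∫ x in Set.Ioc 0 (1 / τ), ψ x * g (a - c * τ * x)) (𝓝[>] 0)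
      (𝓝 ((∫ x in Set.Ioi 0, ψ x) * g a)) := by
  simp_rw [← Set.Ioi_inter_Iic, ← setIntegral_indicator measurableSet_Iic, ← integral_mul_const]
  refine tendsto_integral_filter_of_dominated_convergence (fun x => ‖ψ x‖ * ‖g‖) ?_ ?_
    (hψ.norm.mul_const _) ?_
  · refine .of_forall fun τ => (AEStronglyMeasurable.indicator ?_ measurableSet_Iic)
    exact hψ.aestronglyMeasurable.mul (g.continuous.comp (by fun_prop)).aestronglyMeasurable
  · refine .of_forall fun τ => .of_forall fun x => ?_
    calc _ ≤ ‖ψ x * g (a - c * τ * x)‖ :=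
          norm_indicator_le_norm_self (fun x => ψ x * g (a - c * τ * x)) x
      _ ≤ ‖ψ x‖ * ‖g‖ := by rw [norm_mul]; gcongr; exact g.norm_coe_le_norm _
  · filter_upwards [self_mem_ae_restrict measurableSet_Ioi] with x (hx : 0 < x)
    have hcont : Tendsto (fun τ => ψ x * g (a - c * τ * x)) (𝓝[>] 0) (𝓝 (ψ x * g a)) := by
      have : ContinuousAt (fun τ => ψ x * g (a - c * τ * x)) 0 := by fun_prop
      simpa using this.tendsto.mono_left nhdsWithin_le_nhds
    refine hcont.congr' ?_
    have hsmall : Set.Ioo 0 (1 / x) ∈ 𝓝[>] (0 : ℝ) := Ioo_mem_nhdsGT (one_div_pos.2 hx)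
    filter_upwards [hsmall] with τ ⟨hτ, hτx⟩
    rw [Set.indicator_of_mem (Set.mem_Iic.2 ((le_one_div hx hτ).2 hτx.le))]

theorem Dstar_weak_convergence_to_dirac_general (ψ : ℝ → ℝ)
    (hint1 : IntegrableOn ψ (Set.Ioi 0))
    (hIpos : 0 < ∫ x in Set.Ioi (0 : ℝ), ψ x) :
    ∀ g : BoundedContinuousFunction ℝ ℝ,
      Tendsto (fun τ : ℝ => ∫ μ in Set.Icc (-1 : ℝ) 1,
          2 * Real.pi * (ψ ((1 - μ) / (2 * τ)) *
            (4 * Real.pi * τ * ∫ x in Set.Ioc (0 : ℝ) (1 / τ), ψ x)⁻¹) * g μ)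
        (𝓝[>] (0 : ℝ)) (𝓝 (g 1)) := by
  intro g
  have hmass : Tendsto (fun τ => ∫ x in Set.Ioc 0 (1 / τ), ψ x) (𝓝[>] 0)
      (𝓝 (∫ x in Set.Ioi 0, ψ x)) := by
    simpa using tendsto_setIntegral_Ioc_one_div_mul_comp_sub hint1 (.const ℝ 1) 0 0
  have hratio := (tendsto_setIntegral_Ioc_one_div_mul_comp_sub hint1 g 1 2).div hmass hIpos.ne'
  rw [mul_div_cancel_left₀ _ hIpos.ne'] at hratio
  refine hratio.congr' ?_
  filter_upwards [self_mem_nhdsWithin] with τ (hτ : 0 < τ)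
  have hsubst : ∀ x, (1 - (1 - 2 * τ * x)) / (2 * τ) = x := fun x => by field_simp; ring
  rw [Pi.div_apply, integral_Icc_neg_one_one_eq_mul_integral_Ioc hτ]
  generalize ∫ x in Set.Ioc 0 (1 / τ), ψ x = mass
  simp_rw [hsubst, fun x =>
    show 2 * Real.pi * (ψ x * (4 * Real.pi * τ * mass)⁻¹) * g (1 - 2 * τ * x)
      = (2 * Real.pi * (4 * Real.pi * τ * mass)⁻¹) * (ψ x * g (1 - 2 * τ * x)) by ring,
    integral_const_mul]
  field_simp
  ring

/-- The probability measures on `[-1,1]` with density `μ ↦ 2π D_*(μ,τ)`, where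
`D_*(μ,τ) = ψ((1-μ)/(2τ)) / (4πτ ∫₀^{1/τ} ψ)`, converge weakly to the Dirac measure `δ₁`
as `τ → 0⁺`. -/
theorem Dstar_weak_convergence_to_dirac (ψ : ℝ → ℝ) (hmeas : Measurable ψ)
    (hpos : ∀ x : ℝ, 0 ≤ x → 0 ≤ ψ x)
    (hint1 : IntegrableOn ψ (Set.Ioi 0))
    (hint2 : IntegrableOn (fun x => x * ψ x) (Set.Ioi 0))
    (hIpos : 0 < ∫ x in Set.Ioi (0 : ℝ), ψ x)
    (heq : ∫ x in Set.Ioi (0 : ℝ), ψ x = ∫ x in Set.Ioi (0 : ℝ), x * ψ x)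
    (htail : ∀ n : ℕ, 2 ≤ n →
      Tendsto (fun τ : ℝ => τ * ∫ x in Set.Ioi (1 / τ), x ^ n * ψ x) (𝓝[>] (0 : ℝ)) (𝓝 0)) :
    ∀ g : BoundedContinuousFunction ℝ ℝ,
      Tendsto (fun τ : ℝ => ∫ μ in Set.Icc (-1 : ℝ) 1,
          2 * Real.pi * (ψ ((1 - μ) / (2 * τ)) *
            (4 * Real.pi * τ * ∫ x in Set.Ioc (0 : ℝ) (1 / τ), ψ x)⁻¹) * g μ)
        (𝓝[>] (0 : ℝ)) (𝓝 (g 1)) :=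
  Dstar_weak_convergence_to_dirac_general ψ hint1 hIpos
end

section
/- Let ψ : (0,∞) → [0,∞) be measurable with 0 < ∫₀^{∞} ψ(x)dx = ∫₀^{∞} x ψ(x)dx < ∞ and assume lim_{τ→0⁺} τ ∫_{1/τ}^{∞} xⁿ ψ(x)dx = 0 for every integer n ≥ 2. For τ > 0 define D_*(μ,τ) = ψ((1−μ)/(2τ)) · [4πτ ∫₀^{1/τ} ψ(x)dx]^{−1} on [−1,1]. Then for every integer l ≥ 1, lim_{τ→0⁺} (2π/τ) ∫_{−1}^{1} D_*(μ,τ)(1 − P_l(μ)) dμ = l(l+1). -/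
/-!
Substituting `μ = 1 - 2τu` turns the quantity into
`(∫₀^{1/τ} u ψ(u) r(τu) du) / ∫₀^{1/τ} ψ`, where `1 - P_l(1 - 2s) = s r(s)`: indeed
`P_l(1 - 2s)` is the shifted Legendre polynomial, whose two lowest coefficients are `1` and
`-l(l+1)`, so `r` is a polynomial with `r 0 = l(l+1)`. By dominated convergence the numerator
tends to `l(l+1) ∫ uψ` and the denominator to `∫ ψ`, and these two moments are equal.
-/

open MeasureTheory Filter Topology

/-- The Legendre polynomial of degree `l`, via Rodrigues' formula. -/
noncomputable def legendreP (l : ℕ) (x : ℝ) : ℝ :=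
  (1 / (2 ^ l * (Nat.factorial l : ℝ))) * iteratedDeriv l (fun y : ℝ => (y ^ 2 - 1) ^ l) x

open Polynomial Set

theorem Polynomial.iteratedDeriv_eval {𝕜 : Type*} [NontriviallyNormedField 𝕜] (p : 𝕜[X])
    (n : ℕ) (x : 𝕜) : iteratedDeriv n (fun x => p.eval x) x = (derivative^[n] p).eval x := by
  induction n generalizing p with
  | zero => rfl
  | succ n ih =>
    rw [iteratedDeriv_succ', Function.iterate_succ_apply, ← ih]
    congr 1
    funext x
    exact p.deriv

theorem Polynomial.coeff_zero_shiftedLegendre (n : ℕ) : (shiftedLegendre n).coeff 0 = 1 := by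
  simp [coeff_shiftedLegendre]

theorem Polynomial.coeff_one_shiftedLegendre (n : ℕ) :
    (shiftedLegendre n).coeff 1 = -(n * (n + 1)) := by
  simp [coeff_shiftedLegendre]

theorem Polynomial.factorial_mul_aeval_shiftedLegendre (n : ℕ) (s : ℝ) :
    (n.factorial : ℝ) * aeval s (shiftedLegendre n) =
      (derivative^[n] (X ^ n * (1 - X) ^ n : ℝ[X])).eval s := by
  have := congrArg (aeval s) (factorial_mul_shiftedLegendre_eq n)
  rw [map_mul, map_natCast] at this
  rw [this, aeval_def, eval₂_eq_eval_map, ← iterate_derivative_map]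
  simp

theorem legendreP_one_sub_two_mul (l : ℕ) (s : ℝ) :
    legendreP l (1 - 2 * s) = aeval s (shiftedLegendre l) := by
  set f : ℝ → ℝ := fun y => (y ^ 2 - 1) ^ l
  have hchain : iteratedDeriv l (fun t => f (1 - 2 * t)) s =
      (-2) ^ l * iteratedDeriv l f (1 - 2 * s) := by
    rw [iteratedDeriv_comp_const_mul (f := fun z => f (1 - z)) (by fun_prop),
      iteratedDeriv_comp_const_sub]
    simp only [smul_eq_mul, neg_pow (2 : ℝ)]
    ring
  have hsubst : (fun t => f (1 - 2 * t)) =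
      fun t => (-4) ^ l * (X ^ l * (1 - X) ^ l : ℝ[X]).eval t := by
    funext t
    simp only [f, eval_mul, eval_pow, eval_sub, eval_one, eval_X, ← mul_pow]
    ring
  rw [hsubst, iteratedDeriv_const_mul_field, iteratedDeriv_eval,
    ← factorial_mul_aeval_shiftedLegendre] at hchain
  have h2 : ((-2 : ℝ) ^ l) ≠ 0 := by positivity
  rw [legendreP]
  field_simp
  apply mul_left_cancel₀ h2
  rw [show (-4 : ℝ) ^ l = (-2) ^ l * 2 ^ l by rw [← mul_pow]; norm_num] at hchain
  linear_combination -hchain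

theorem exists_continuous_one_sub_legendreP_eq_mul (l : ℕ) :
    ∃ r : ℝ → ℝ, Continuous r ∧ r 0 = l * (l + 1) ∧
      ∀ s, 1 - legendreP l (1 - 2 * s) = s * r s := by
  obtain ⟨q, hq⟩ : X ∣ 1 - shiftedLegendre l := by
    rw [X_dvd_iff, coeff_sub, coeff_one_zero, coeff_zero_shiftedLegendre, sub_self]
  have hq0 : q.coeff 0 = l * (l + 1) := by
    have := congrArg (coeff · 1) hq
    simp only [coeff_sub, coeff_one, coeff_one_shiftedLegendre] at this
    simpa using this.symm
  refine ⟨fun s => aeval s q, q.continuous_aeval, ?_, fun s => ?_⟩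
  · change aeval (0 : ℝ) (q : ℤ[X]) = _
    rw [← coeff_zero_eq_aeval_zero', hq0]
    simp
  · rw [legendreP_one_sub_two_mul, ← map_one (aeval (R := ℤ) s), ← map_sub, hq, map_mul,
      aeval_X]

theorem setIntegral_Icc_neg_one_one_eq {τ : ℝ} (hτ : 0 < τ) (F : ℝ → ℝ) :
    ∫ μ in Icc (-1) 1, F μ = 2 * τ * ∫ u in Ioc 0 (1 / τ), F (1 - 2 * (τ * u)) := by
  have h2τ : -(2 * τ) ≠ 0 := by linarith
  rw [← intervalIntegral.integral_of_le (by positivity), integral_Icc_eq_integral_Ioc,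
    ← intervalIntegral.integral_of_le (by norm_num)]
  have := intervalIntegral.integral_comp_mul_add F h2τ 1 (a := 0) (b := 1 / τ)
  simp only [mul_zero, zero_add] at this
  rw [show -(2 * τ) * (1 / τ) + 1 = -1 by field_simp; ring] at this
  rw [intervalIntegral.integral_symm (-1) 1, smul_eq_mul] at this
  simp_rw [show ∀ x, 1 - 2 * (τ * x) = -(2 * τ) * x + 1 by intro x; ring]
  rw [this]
  field_simp

theorem tendsto_setIntegral_Ioc_one_div_mul_comp_mul {f r : ℝ → ℝ}
    (hf : IntegrableOn f (Ioi 0)) (hr : Continuous r) :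
    Tendsto (fun τ => ∫ u in Ioc 0 (1 / τ), f u * r (τ * u)) (𝓝[>] 0)
      (𝓝 ((∫ u in Ioi 0, f u) * r 0)) := by
  obtain ⟨M, hM⟩ := isCompact_Icc.exists_bound_of_continuousOn (hr.continuousOn (s := Icc 0 1))
  have hF : ∀ τ, ∫ u in Ioc 0 (1 / τ), f u * r (τ * u) =
      ∫ u in Ioi 0, (Ioc 0 (1 / τ)).indicator (fun u => f u * r (τ * u)) u := fun τ => by
    rw [setIntegral_indicator measurableSet_Ioc, inter_eq_right.mpr Ioc_subset_Ioi_self]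
  simp_rw [hF, ← integral_mul_const]
  refine tendsto_integral_filter_of_dominated_convergence (fun u => M * ‖f u‖) ?_ ?_
    (hf.norm.const_mul M) ?_
  · refine Eventually.of_forall fun τ => ?_
    have hrτ : Continuous fun u => r (τ * u) := by fun_prop
    exact (hf.aestronglyMeasurable.mul hrτ.aestronglyMeasurable).indicator measurableSet_Ioc
  · filter_upwards [self_mem_nhdsWithin] with τ (hτ : 0 < τ)
    refine ae_of_all _ fun u => ?_
    by_cases hu : u ∈ Ioc 0 (1 / τ)
    · have hτu : τ * u ∈ Icc (0 : ℝ) 1 :=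
        ⟨by nlinarith [hu.1], by linarith [(le_div_iff₀ hτ).mp hu.2]⟩
      rw [indicator_of_mem hu, norm_mul, mul_comm]
      gcongr
      exact hM _ hτu
    · rw [indicator_of_notMem hu, norm_zero]
      exact mul_nonneg ((norm_nonneg _).trans (hM 0 ⟨le_rfl, zero_le_one⟩)) (norm_nonneg _)
  · rw [ae_restrict_iff' measurableSet_Ioi]
    refine ae_of_all _ fun u (hu : 0 < u) => ?_
    have hFu : ∀ᶠ τ in 𝓝[>] 0,
        f u * r (τ * u) = (Ioc 0 (1 / τ)).indicator (fun u => f u * r (τ * u)) u := by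
      filter_upwards [self_mem_nhdsWithin,
        eventually_nhdsWithin_of_eventually_nhds (eventually_le_nhds (one_div_pos.mpr hu))]
        with τ (hτ : 0 < τ) hτu
      rw [indicator_of_mem (show u ∈ Ioc 0 (1 / τ) from ⟨hu, (le_one_div hu hτ).mpr hτu⟩)]
    refine Tendsto.congr' hFu (tendsto_const_nhds.mul ?_)
    exact ((by fun_prop : Continuous fun τ => r (τ * u)).tendsto' 0 (r 0) (by simp)).mono_left
      nhdsWithin_le_nhds

theorem Dstar_grazing_consistency_general (ψ : ℝ → ℝ)
    (hint1 : IntegrableOn ψ (Set.Ioi 0))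
    (hint2 : IntegrableOn (fun x => x * ψ x) (Set.Ioi 0))
    (hIpos : 0 < ∫ x in Set.Ioi (0 : ℝ), ψ x)
    (heq : ∫ x in Set.Ioi (0 : ℝ), ψ x = ∫ x in Set.Ioi (0 : ℝ), x * ψ x)
    (l : ℕ) :
    Tendsto (fun τ : ℝ => (2 * Real.pi / τ) *
        ∫ μ in Set.Icc (-1 : ℝ) 1,
          (ψ ((1 - μ) / (2 * τ)) *
            (4 * Real.pi * τ * ∫ x in Set.Ioc (0 : ℝ) (1 / τ), ψ x)⁻¹) * (1 - legendreP l μ))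
      (𝓝[>] (0 : ℝ)) (𝓝 ((l : ℝ) * ((l : ℝ) + 1))) := by
  obtain ⟨r, hr, hr0, hPr⟩ := exists_continuous_one_sub_legendreP_eq_mul l
  have hmass := tendsto_setIntegral_Ioc_one_div_mul_comp_mul hint1 (r := fun _ => 1)
    continuous_const
  have hmoment := tendsto_setIntegral_Ioc_one_div_mul_comp_mul hint2 hr
  simp only [mul_one] at hmass
  rw [← heq, hr0] at hmoment
  have hlim := hmoment.div hmass hIpos.ne'
  rw [mul_div_cancel_left₀ _ hIpos.ne'] at hlim
  refine hlim.congr' ?_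
  filter_upwards [self_mem_nhdsWithin] with τ (hτ : 0 < τ)
  rw [setIntegral_Icc_neg_one_one_eq hτ]
  set I := ∫ x in Ioc 0 (1 / τ), ψ x
  have hintegrand : ∀ u, ψ ((1 - (1 - 2 * (τ * u))) / (2 * τ)) * (4 * Real.pi * τ * I)⁻¹ *
      (1 - legendreP l (1 - 2 * (τ * u))) =
        τ * (4 * Real.pi * τ * I)⁻¹ * (u * ψ u * r (τ * u)) := by
    intro u
    rw [hPr, show (1 - (1 - 2 * (τ * u))) / (2 * τ) = u by field_simp; ring]
    ring
  simp_rw [hintegrand, integral_const_mul, Pi.div_apply]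
  field_simp
  ring

/-- For the general approximated grazing-collision kernel `D_*(μ,τ)` built from `ψ` and every
integer `l ≥ 1`, `(2π/τ) ∫_{-1}^{1} D_*(μ,τ)(1 - P_l(μ)) dμ → l(l+1)` as `τ → 0⁺`. -/
theorem Dstar_grazing_consistency (ψ : ℝ → ℝ) (hmeas : Measurable ψ)
    (hpos : ∀ x : ℝ, 0 ≤ x → 0 ≤ ψ x)
    (hint1 : IntegrableOn ψ (Set.Ioi 0))
    (hint2 : IntegrableOn (fun x => x * ψ x) (Set.Ioi 0))
    (hIpos : 0 < ∫ x in Set.Ioi (0 : ℝ), ψ x)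
    (heq : ∫ x in Set.Ioi (0 : ℝ), ψ x = ∫ x in Set.Ioi (0 : ℝ), x * ψ x)
    (htail : ∀ n : ℕ, 2 ≤ n →
      Tendsto (fun τ : ℝ => τ * ∫ x in Set.Ioi (1 / τ), x ^ n * ψ x) (𝓝[>] (0 : ℝ)) (𝓝 0))
    (l : ℕ) (hl : 1 ≤ l) :
    Tendsto (fun τ : ℝ => (2 * Real.pi / τ) *
        ∫ μ in Set.Icc (-1 : ℝ) 1,
          (ψ ((1 - μ) / (2 * τ)) *
            (4 * Real.pi * τ * ∫ x in Set.Ioc (0 : ℝ) (1 / τ), ψ x)⁻¹) * (1 - legendreP l μ))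
      (𝓝[>] (0 : ℝ)) (𝓝 ((l : ℝ) * ((l : ℝ) + 1))) :=
  Dstar_grazing_consistency_general ψ hint1 hint2 hIpos heq l
end
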